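/- arXiv:1711.02165 — 9 statements merged into one kernel-verified Lean document; each statement's English description precedes it below -/
import Mathlib

section
/- The sequence β_i is strictly increasing for 0 ≤ i ≤ n, i.e., β_{i+1} > β_i for all 0 ≤ i < n. -/
/-!
Write `μ = λ⁻¹` and `β_i = A_i / (3n + i)`. The numerators satisfy
`A_{i+1} - A_i = 2μ^i - 1/2 + (n - i - 1)(1 - μ)μ^i`, and Bernoulli's inequality gives
`μ^i ≥ 1 - i/(4n) ≥ 3/4` for `i ≤ n`, so the numerator grows by at least `1` while the
denominator grows by exactly `1`. Since moreover `A_i < 3n + i`, the ratio increases.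
-/

noncomputable def Sseq (n i : ℕ) : ℝ :=
  n + ∑ j ∈ Finset.range i, ((1 + 1 / (4 * (n : ℝ)))⁻¹) ^ j

noncomputable def beta (n i : ℕ) : ℝ :=
  (1 / (3 * (n : ℝ) + i)) *
    ((3 * (n : ℝ) - i) / 2 - ((n : ℝ) - i) / (1 + 1 / (4 * (n : ℝ))) ^ i + Sseq n i)

lemma div_lt_div_add_one_of_lt {a b d : ℝ} (hd : 0 < d) (had : a < d) (hab : a + 1 ≤ b) :
    a / d < b / (d + 1) := by
  rw [div_lt_div_iff₀ hd (by linarith)]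
  nlinarith

lemma three_quarters_le_inv_one_add_pow {a : ℝ} (ha : 0 ≤ a) {i : ℕ} (hia : i * a ≤ 1 / 4) :
    3 / 4 ≤ ((1 + a)⁻¹) ^ i := by
  have hlow : -a ≤ (1 + a)⁻¹ - 1 := by
    rw [inv_eq_one_div, le_sub_iff_add_le, le_div_iff₀ (by linarith)]
    nlinarith
  have hneg : -1 ≤ (1 + a)⁻¹ - 1 := by
    have : 0 ≤ (1 + a)⁻¹ := by positivity
    linarith
  calc 3 / 4 ≤ 1 + i * ((1 + a)⁻¹ - 1) := by nlinarith [(Nat.cast_nonneg i : (0 : ℝ) ≤ i)]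
    _ ≤ (1 + ((1 + a)⁻¹ - 1)) ^ i := one_add_mul_le_pow (by linarith) i
    _ = ((1 + a)⁻¹) ^ i := by ring

/-- The numerator of `β_i`, with `λ⁻¹` replaced by an arbitrary ratio `μ`. -/
noncomputable def betaNum (n μ : ℝ) (i : ℕ) : ℝ :=
  (3 * n - i) / 2 - (n - i) * μ ^ i + n + ∑ j ∈ Finset.range i, μ ^ j

lemma beta_eq_betaNum_div (n i : ℕ) :
    beta n i = betaNum n (1 + 1 / (4 * (n : ℝ)))⁻¹ i / (3 * n + i) := by
  simp only [beta, Sseq, betaNum, inv_pow]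
  ring

lemma betaNum_succ_sub (n μ : ℝ) (i : ℕ) :
    betaNum n μ (i + 1) - betaNum n μ i = 2 * μ ^ i - 1 / 2 + (n - i - 1) * (1 - μ) * μ ^ i := by
  simp only [betaNum, Finset.sum_range_succ, pow_succ, Nat.cast_succ]
  ring

section

variable {n μ : ℝ} {i : ℕ}

lemma betaNum_add_one_le_succ (hμ : μ ≤ 1) (hpow : 3 / 4 ≤ μ ^ i) (hi : i + 1 ≤ n) :
    betaNum n μ i + 1 ≤ betaNum n μ (i + 1) := by
  have hslack : 0 ≤ (n - i - 1) * (1 - μ) * μ ^ i :=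
    mul_nonneg (mul_nonneg (by linarith) (by linarith)) (by linarith)
  linarith [betaNum_succ_sub n μ i]

lemma betaNum_lt (hμ₀ : 0 ≤ μ) (hμ₁ : μ ≤ 1) (hpow : 3 / 4 ≤ μ ^ i) (hi : i < n) :
    betaNum n μ i < 3 * n + i := by
  have hsum : ∑ j ∈ Finset.range i, μ ^ j ≤ i := by
    simpa using Finset.sum_le_card_nsmul (Finset.range i) (μ ^ ·) 1
      fun j _ => pow_le_one₀ hμ₀ hμ₁
  have : 3 / 4 * (n - i) ≤ (n - i) * μ ^ i := by nlinarith
  have : (0 : ℝ) ≤ i := Nat.cast_nonneg i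
  unfold betaNum
  linarith

end

theorem stmt_1_general (n : ℕ) (i : ℕ) (hi : i < n) :
    beta n i < beta n (i + 1) := by
  set μ : ℝ := (1 + 1 / (4 * (n : ℝ)))⁻¹
  have hn : (0 : ℝ) < n := by exact_mod_cast (Nat.zero_le i).trans_lt hi
  have hin : (i : ℝ) + 1 ≤ n := by exact_mod_cast hi
  have hμ₀ : 0 ≤ μ := by positivity
  have hμ₁ : μ ≤ 1 := inv_le_one_of_one_le₀ (by simp only [le_add_iff_nonneg_right]; positivity)
  have hpow : 3 / 4 ≤ μ ^ i := by
    refine three_quarters_le_inv_one_add_pow (by positivity) ?_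
    rw [mul_one_div, div_le_div_iff₀ (by positivity) (by norm_num)]
    linarith
  rw [beta_eq_betaNum_div, beta_eq_betaNum_div, Nat.cast_succ, ← add_assoc]
  exact div_lt_div_add_one_of_lt (by positivity) (betaNum_lt hμ₀ hμ₁ hpow (by linarith))
    (betaNum_add_one_le_succ hμ₁ hpow hin)

theorem stmt_1 (n : ℕ) (hn : 1 ≤ n) (i : ℕ) (hi : i < n) :
    beta n i < beta n (i + 1) :=
  stmt_1_general n i hi
end

section
/- For all 1 ≤ i ≤ n, we have 1/2 < β_1 ≤ β_i ≤ 3/4, where β_1 = 1/2 + 5/(4λ(3n+1)). -/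
lemma one_sub_mul_le_one_sub_pow {t : ℝ} (ht : t ≤ 2) (k : ℕ) : 1 - k * t ≤ (1 - t) ^ k := by
  simpa [sub_eq_add_neg] using one_add_mul_le_pow (a := -t) (by linarith) k

lemma one_sub_pow_le_one_sub_mul_add_choose_two {t : ℝ} (ht0 : 0 ≤ t) (ht1 : t ≤ 1) (k : ℕ) :
    (1 - t) ^ k ≤ 1 - k * t + k.choose 2 * t ^ 2 := by
  induction k with
  | zero => simp
  | succ k ih =>
    have hchoose : ((k + 1).choose 2 : ℝ) = k + k.choose 2 := by
      rw [Nat.choose_succ_succ', Nat.choose_one_right, Nat.cast_add]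
    calc (1 - t) ^ (k + 1) = (1 - t) * (1 - t) ^ k := pow_succ' _ _
      _ ≤ (1 - t) * (1 - k * t + k.choose 2 * t ^ 2) :=
        mul_le_mul_of_nonneg_left ih (by linarith)
      _ = 1 - (k + 1) * t + (k + k.choose 2) * t ^ 2 - k.choose 2 * t ^ 3 := by ring
      _ ≤ 1 - ((k + 1 : ℕ) : ℝ) * t + ((k + 1).choose 2 : ℕ) * t ^ 2 := by
        rw [hchoose]
        push_cast
        nlinarith [show (0 : ℝ) ≤ k.choose 2 * t ^ 3 by positivity]

section ClosedForm

variable {n : ℕ}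

lemma inv_one_add_inv_four_mul (hn : n ≠ 0) :
    (1 + 1 / (4 * (n : ℝ)))⁻¹ = 1 - 1 / (4 * n + 1) := by
  have : (n : ℝ) ≠ 0 := by exact_mod_cast hn
  field_simp
  ring

lemma Sseq_eq (hn : n ≠ 0) (k : ℕ) :
    Sseq n k = n + (4 * n + 1) * (1 - (1 - 1 / (4 * (n : ℝ) + 1)) ^ k) := by
  have hN : (0 : ℝ) < 4 * n + 1 := by positivity
  rw [Sseq, inv_one_add_inv_four_mul hn, geom_sum_eq (by simp [hN.ne'])]
  field_simp
  ring

lemma beta_eq (hn : n ≠ 0) (k : ℕ) :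
    beta n k = 1 / 2 + (5 * n + 1 - k) * (1 - (1 - 1 / (4 * (n : ℝ) + 1)) ^ k) / (3 * n + k) := by
  rw [beta, Sseq_eq hn, div_eq_mul_inv _ ((1 + _) ^ k), ← inv_pow, inv_one_add_inv_four_mul hn]
  field_simp
  ring

lemma beta_one_eq (hn : n ≠ 0) :
    beta n 1 = 1 / 2 + 5 * n / ((3 * n + 1) * (4 * n + 1)) := by
  rw [beta_eq hn]
  field_simp
  ring

lemma beta_le_three_quarters (hn : n ≠ 0) {k : ℕ} (hk : k ≤ n) : beta n k ≤ 3 / 4 := by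
  have hK : (k : ℝ) ≤ n := by exact_mod_cast hk
  set t : ℝ := 1 / (4 * n + 1) with ht
  have htN : t * (4 * n + 1) = 1 := by rw [ht]; field_simp
  have ht0 : 0 ≤ t := by positivity
  have hy : 1 - (1 - t) ^ k ≤ k * t := by
    linarith [one_sub_mul_le_one_sub_pow (t := t) (by nlinarith) k]
  have hpoly : 4 * k * (5 * n + 1 - k) ≤ ((3 * n + k) : ℝ) * (4 * n + 1) := by
    nlinarith [mul_nonneg (sub_nonneg.mpr hK) (show (0 : ℝ) ≤ 12 * n + 3 - 4 * k by linarith)]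
  suffices (5 * n + 1 - k) * (1 - (1 - t) ^ k) / (3 * n + k) ≤ 1 / 4 by
    rw [beta_eq hn]; linarith
  rw [div_le_iff₀ (by positivity)]
  calc (5 * n + 1 - k) * (1 - (1 - t) ^ k) ≤ (5 * n + 1 - k) * (k * t) :=
        mul_le_mul_of_nonneg_left hy (by linarith)
    _ ≤ 1 / 4 * (3 * n + k) := by
      linear_combination
        (1 / 4) * mul_le_mul_of_nonneg_right hpoly ht0 + ((3 * n + k) / 4) * htN

lemma beta_one_le_beta (hn : n ≠ 0) {k : ℕ} (hk1 : 1 ≤ k) (hk : k ≤ n) :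
    beta n 1 ≤ beta n k := by
  have hN : (1 : ℝ) ≤ n := by exact_mod_cast Nat.one_le_iff_ne_zero.mpr hn
  have hK1 : (1 : ℝ) ≤ k := by exact_mod_cast hk1
  have hK : (k : ℝ) ≤ n := by exact_mod_cast hk
  set t : ℝ := 1 / (4 * n + 1) with ht
  have htN : t * (4 * n + 1) = 1 := by rw [ht]; field_simp
  have ht0 : 0 ≤ t := by positivity
  have hy : k * (8 * n + 3 - k) / 2 * t ^ 2 ≤ 1 - (1 - t) ^ k := by
    have := one_sub_pow_le_one_sub_mul_add_choose_two ht0 (by nlinarith) k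
    rw [Nat.cast_choose_two] at this
    linear_combination this + (k * t) * htN
  -- the difference of the two sides is `(k - 1) * Q` with `Q` the quadratic below
  have hpoly : 10 * n * (3 * n + k) * (4 * n + 1) ≤
      ((3 * n + 1) * (5 * n + 1 - k) * (k * (8 * n + 3 - k)) : ℝ) := by
    have hQ : (0 : ℝ) ≤
        (3 * n + 1) * k ^ 2 - (39 * n ^ 2 + 22 * n + 3) * k + 120 * n ^ 3 + 30 * n ^ 2 := by
      nlinarith
        [mul_le_mul_of_nonneg_left hK (show (0 : ℝ) ≤ 39 * n ^ 2 + 22 * n + 3 by positivity)]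
    nlinarith [mul_nonneg (sub_nonneg.mpr hK1) hQ]
  suffices
      5 * n / ((3 * n + 1) * (4 * n + 1)) ≤ (5 * n + 1 - k) * (1 - (1 - t) ^ k) / (3 * n + k) by
    rw [beta_one_eq hn, beta_eq hn]; linarith
  rw [div_le_div_iff₀ (by positivity) (by positivity)]
  have h5 : (0 : ℝ) ≤ 5 * n + 1 - k := by linarith
  calc 5 * n * (3 * n + k)
        = 10 * n * (3 * n + k) * (4 * n + 1) * (t ^ 2 / 2 * (4 * n + 1)) := by
        linear_combination (-5 * n * (3 * n + k) * (t * (4 * n + 1) + 1)) * htN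
    _ ≤ (3 * n + 1) * (5 * n + 1 - k) * (k * (8 * n + 3 - k)) * (t ^ 2 / 2 * (4 * n + 1)) := by
        gcongr
    _ = (5 * n + 1 - k) * (k * (8 * n + 3 - k) / 2 * t ^ 2) * ((3 * n + 1) * (4 * n + 1)) := by ring
    _ ≤ (5 * n + 1 - k) * (1 - (1 - t) ^ k) * ((3 * n + 1) * (4 * n + 1)) := by gcongr

end ClosedForm

theorem stmt_2 (n : ℕ) (hn : 1 ≤ n) (i : ℕ) (h1 : 1 ≤ i) (hi : i ≤ n) :
    1 / 2 < beta n 1 ∧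
    beta n 1 = 1 / 2 + 5 / (4 * (1 + 1 / (4 * (n : ℝ))) * (3 * (n : ℝ) + 1)) ∧
    beta n 1 ≤ beta n i ∧
    beta n i ≤ 3 / 4 := by
  have hn0 : n ≠ 0 := Nat.one_le_iff_ne_zero.mp hn
  refine ⟨?_, ?_, beta_one_le_beta hn0 h1 hi, beta_le_three_quarters hn0 hi⟩
  · rw [beta_one_eq hn0]
    have : (0 : ℝ) < 5 * n / ((3 * n + 1) * (4 * n + 1)) := by positivity
    linarith
  · rw [beta_one_eq hn0]
    field_simp
end

section
/- For all 0 ≤ i ≤ n−1 and 1 ≤ i+1 ≤ n, S_i/(n+i) ≥ S_{i+1}/(n+i+1). -/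
open Finset

section GeomSum

variable {K : Type*} [Field K] [LinearOrder K] [IsStrictOrderedRing K] {c r : K}

theorem natCast_mul_pow_le_sum_range_pow (hr₀ : 0 ≤ r) (hr₁ : r ≤ 1) (i : ℕ) :
    (i : K) * r ^ i ≤ ∑ j ∈ range i, r ^ j := by
  simpa [nsmul_eq_mul] using card_nsmul_le_sum (range i) (r ^ ·) (r ^ i)
    fun j hj => pow_le_pow_of_le_one hr₀ hr₁ (mem_range.mp hj).le

theorem add_natCast_mul_pow_le_add_sum_range_pow (hc : 0 ≤ c) (hr₀ : 0 ≤ r) (hr₁ : r ≤ 1)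
    (i : ℕ) : (c + i) * r ^ i ≤ c + ∑ j ∈ range i, r ^ j := by
  have hc_mul : c * r ^ i ≤ c := mul_le_of_le_one_right hc (pow_le_one₀ hr₀ hr₁)
  linear_combination hc_mul + natCast_mul_pow_le_sum_range_pow hr₀ hr₁ i

/-- Adding the term `r ^ i` to the numerator and `1` to the denominator can only lower the
ratio, because `r ^ i` is at most the current average `(c + ∑_{j<i} r ^ j) / (c + i)`. -/
theorem add_sum_range_succ_pow_div_le (hc : 0 ≤ c) (hr₀ : 0 ≤ r) (hr₁ : r ≤ 1) {i : ℕ}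
    (hci : 0 < c + i) :
    (c + ∑ j ∈ range (i + 1), r ^ j) / (c + i + 1) ≤ (c + ∑ j ∈ range i, r ^ j) / (c + i) := by
  rw [sum_range_succ, ← add_assoc, div_le_div_iff₀ (by linarith) hci]
  linear_combination add_natCast_mul_pow_le_add_sum_range_pow hc hr₀ hr₁ i

end GeomSum

theorem stmt_4_general (n : ℕ) (i : ℕ) (hi : i + 1 ≤ n) :
    Sseq n i / ((n : ℝ) + i) ≥ Sseq n (i + 1) / ((n : ℝ) + i + 1) := by
  have hn : (0 : ℝ) < n := by exact_mod_cast (by omega : 0 < n)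
  have hr₀ : (0 : ℝ) ≤ (1 + 1 / (4 * (n : ℝ)))⁻¹ := by positivity
  have hr₁ : (1 + 1 / (4 * (n : ℝ)))⁻¹ ≤ 1 :=
    inv_le_one_of_one_le₀ (le_add_of_nonneg_right (by positivity))
  exact add_sum_range_succ_pow_div_le hn.le hr₀ hr₁ (by positivity)

theorem stmt_4 (n : ℕ) (hn : 1 ≤ n) (i : ℕ) (hi : i + 1 ≤ n) :
    Sseq n i / ((n : ℝ) + i) ≥ Sseq n (i + 1) / ((n : ℝ) + i + 1) :=
  stmt_4_general n i hi
end

section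
/- For all 1 ≤ i ≤ n, β_i ≤ S_i/(n+i). -/
theorem le_Sseq (n i : ℕ) : (n : ℝ) ≤ Sseq n i :=
  le_add_of_nonneg_right (Finset.sum_nonneg fun _ _ => by positivity)

theorem one_div_mul_sub_add_le_div {n i D S : ℝ} (hn : 0 < n) (hi : 0 ≤ i) (hD : 0 ≤ D)
    (hS : n ≤ S) : 1 / (3 * n + i) * ((3 * n - i) / 2 - D + S) ≤ S / (n + i) := by
  have amgm : (n + i) * (3 * n - i) ≤ 4 * n ^ 2 := by nlinarith [sq_nonneg (n - i)]
  rw [one_div_mul_eq_div, div_le_div_iff₀ (by positivity) (by positivity)]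
  nlinarith [mul_nonneg hD (by positivity : 0 ≤ n + i)]

theorem stmt_5_general (n : ℕ) (hn : 1 ≤ n) (i : ℕ) (hi : i ≤ n) :
    beta n i ≤ Sseq n i / ((n : ℝ) + i) :=
  one_div_mul_sub_add_le_div (by exact_mod_cast hn) i.cast_nonneg
    (div_nonneg (sub_nonneg.2 (by exact_mod_cast hi)) (by positivity)) (le_Sseq n i)

theorem stmt_5 (n : ℕ) (hn : 1 ≤ n) (i : ℕ) (h1 : 1 ≤ i) (hi : i ≤ n) :
    beta n i ≤ Sseq n i / ((n : ℝ) + i) :=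
  stmt_5_general n hn i hi
end

section
/- Let a_i and a_{i+1} be probability mass functions on {0,...,V} with CDFs A_i, A_{i+1} satisfying Σ_{j=0}^x A_{i+1}(j) ≥ Σ_{j=0}^x A_i(j) for all x. If v_i, v_{i+1} are such that A_i(v_i) = A_{i+1}(v_{i+1}) = α, then Σ_{j=0}^{v_{i+1}} j·a_{i+1}(j) ≤ Σ_{j=0}^{v_i} j·a_i(j). -/
/-!
Abel summation writes the truncated mean `∑_{j ≤ v} j a(j)` as `∑_{i < v} (A(v) - A(i))`. With
`A₂(v₂) = α` and second-order dominance at `v₂ - 1`, the left-hand side is at most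
`∑_{i < v₂} (α - A₁(i))`; since `A₁` is monotone with `A₁(v₁) = α`, the summands are nonnegative
exactly for `i < v₁`, so this sum is largest at `v₂ = v₁`, where it is the right-hand side.
-/

open Finset

theorem monotone_sum_range_succ {M : Type*} [AddCommMonoid M] [PartialOrder M]
    [IsOrderedAddMonoid M] {a : ℕ → M} (ha : ∀ j, 0 ≤ a j) :
    Monotone fun x => ∑ j ∈ range (x + 1), a j :=
  fun _ _ h => sum_le_sum_of_subset_of_nonneg (range_subset_range.mpr (by omega))
    fun j _ _ => ha j

theorem sum_range_succ_mul_eq_sum_sub {R : Type*} [CommRing R] (a : ℕ → R) (v : ℕ) :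
    ∑ j ∈ range (v + 1), (j : R) * a j =
      ∑ i ∈ range v, (∑ j ∈ range (v + 1), a j - ∑ j ∈ range (i + 1), a j) := by
  induction v with
  | zero => simp
  | succ n ih =>
    rw [sum_range_succ, ih, sum_range_succ (fun i => _ - _) n]
    simp only [sum_range_succ _ (n + 1), add_sub_right_comm _ (a (n + 1)), sum_add_distrib,
      sum_const, card_range, nsmul_eq_mul]
    push_cast
    ring

theorem sum_range_sub_le_of_monotone {α : Type*} [AddCommGroup α] [LinearOrder α]
    [IsOrderedAddMonoid α] {A : ℕ → α} (hA : Monotone A) (m n : ℕ) :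
    ∑ j ∈ range n, (A m - A j) ≤ ∑ j ∈ range m, (A m - A j) := by
  rcases le_total n m with h | h
  · rw [← sum_range_add_sum_Ico _ h]
    exact le_add_of_nonneg_right <| sum_nonneg fun j hj =>
      sub_nonneg.mpr <| hA (mem_Ico.mp hj).2.le
  · rw [← sum_range_add_sum_Ico _ h]
    exact add_le_of_nonpos_right <| sum_nonpos fun j hj =>
      sub_nonpos.mpr <| hA (mem_Ico.mp hj).1

theorem stmt_7_general (V : ℕ) (a₁ a₂ : ℕ → ℝ)
    (ha₁0 : ∀ j, 0 ≤ a₁ j)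
    (A₁ A₂ : ℕ → ℝ)
    (hA₁ : ∀ x, A₁ x = ∑ j ∈ Finset.range (x + 1), a₁ j)
    (hA₂ : ∀ x, A₂ x = ∑ j ∈ Finset.range (x + 1), a₂ j)
    (hdom : ∀ x ≤ V, ∑ j ∈ Finset.range (x + 1), A₂ j ≥ ∑ j ∈ Finset.range (x + 1), A₁ j)
    (α : ℝ) (v₁ v₂ : ℕ) (hv₂ : v₂ ≤ V)
    (h1 : A₁ v₁ = α) (h2 : A₂ v₂ = α) :
    ∑ j ∈ Finset.range (v₂ + 1), (j : ℝ) * a₂ j ≤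
      ∑ j ∈ Finset.range (v₁ + 1), (j : ℝ) * a₁ j := by
  have hmono : Monotone A₁ := by
    rw [funext hA₁]
    exact monotone_sum_range_succ ha₁0
  have habel₁ := sum_range_succ_mul_eq_sum_sub a₁ v₁
  have habel₂ := sum_range_succ_mul_eq_sum_sub a₂ v₂
  simp only [← hA₁, ← hA₂] at habel₁ habel₂
  have hdom' : ∑ i ∈ range v₂, A₁ i ≤ ∑ i ∈ range v₂, A₂ i := by
    cases v₂ with
    | zero => simp
    | succ n => exact hdom n (by omega)
  calc ∑ j ∈ range (v₂ + 1), (j : ℝ) * a₂ j = ∑ i ∈ range v₂, (α - A₂ i) := by rw [habel₂, h2]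
    _ ≤ ∑ i ∈ range v₂, (α - A₁ i) := by simp only [sum_sub_distrib]; linarith
    _ ≤ ∑ i ∈ range v₁, (α - A₁ i) := h1 ▸ sum_range_sub_le_of_monotone hmono v₁ v₂
    _ = ∑ j ∈ range (v₁ + 1), (j : ℝ) * a₁ j := by rw [habel₁, h1]

theorem stmt_7 (V : ℕ) (a₁ a₂ : ℕ → ℝ)
    (ha₁0 : ∀ j, 0 ≤ a₁ j) (ha₂0 : ∀ j, 0 ≤ a₂ j)
    (ha₁1 : ∑ j ∈ Finset.range (V + 1), a₁ j = 1)
    (ha₂1 : ∑ j ∈ Finset.range (V + 1), a₂ j = 1)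
    (A₁ A₂ : ℕ → ℝ)
    (hA₁ : ∀ x, A₁ x = ∑ j ∈ Finset.range (x + 1), a₁ j)
    (hA₂ : ∀ x, A₂ x = ∑ j ∈ Finset.range (x + 1), a₂ j)
    (hdom : ∀ x ≤ V, ∑ j ∈ Finset.range (x + 1), A₂ j ≥ ∑ j ∈ Finset.range (x + 1), A₁ j)
    (α : ℝ) (v₁ v₂ : ℕ) (hv₁ : v₁ ≤ V) (hv₂ : v₂ ≤ V)
    (h1 : A₁ v₁ = α) (h2 : A₂ v₂ = α) :
    ∑ j ∈ Finset.range (v₂ + 1), (j : ℝ) * a₂ j ≤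
      ∑ j ∈ Finset.range (v₁ + 1), (j : ℝ) * a₁ j :=
  stmt_7_general V a₁ a₂ ha₁0 A₁ A₂ hA₁ hA₂ hdom α v₁ v₂ hv₂ h1 h2
end

section
/- For the hard FedEx instance, R̃_{≥i}(n+i+1) − R_{≥i}(n+i+1) = (β_i − C)(2n−1) > 0, i.e., (n+1−i)(C + S_i) − β_i(n+i+1) − (n−i)(λ^{−i} + S_i) = (β_i − 1/2)(2n−1) > 0. -/
/-! The identity only uses the defining relation `β (3n + i) = (3n - i)/2 - (n - i)/λ^i + S_i`:
substituting it, all terms in `S_i` and `λ^{-i}` cancel and `(β - 1/2)(2n - 1)` is what remains.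
Positivity is then `β > 1/2` together with `2n - 1 > 0`. -/

theorem beta_mul_denom (n i : ℕ) (hn : 1 ≤ n) :
    beta n i * (3 * (n : ℝ) + i)
      = (3 * (n : ℝ) - i) / 2 - ((n : ℝ) - i) / (1 + 1 / (4 * (n : ℝ))) ^ i + Sseq n i := by
  have hdenom : (3 * (n : ℝ) + i) ≠ 0 := by
    have : (1 : ℝ) ≤ n := by exact_mod_cast hn
    positivity
  rw [beta, one_div_mul_eq_div, div_mul_cancel₀ _ hdenom]

theorem stmt_11_general (n i : ℕ) (hn : 1 ≤ n)
    (hβ : beta n i > 1 / 2) :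
    ((n : ℝ) + 1 - i) * (1 / 2 + Sseq n i)
        - beta n i * ((n : ℝ) + i + 1)
        - ((n : ℝ) - i) * (((1 + 1 / (4 * (n : ℝ))) ^ i)⁻¹ + Sseq n i)
      = (beta n i - 1 / 2) * (2 * (n : ℝ) - 1) ∧
    (beta n i - 1 / 2) * (2 * (n : ℝ) - 1) > 0 := by
  refine ⟨by linear_combination -beta_mul_denom n i hn, mul_pos (sub_pos.2 hβ) ?_⟩
  have : (1 : ℝ) ≤ n := by exact_mod_cast hn
  linarith

theorem stmt_11 (n i : ℕ) (hn : 1 ≤ n) (h1 : 1 ≤ i) (hi : i ≤ n)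
    (hβ : beta n i > 1 / 2) :
    ((n : ℝ) + 1 - i) * (1 / 2 + Sseq n i)
        - beta n i * ((n : ℝ) + i + 1)
        - ((n : ℝ) - i) * (((1 + 1 / (4 * (n : ℝ))) ^ i)⁻¹ + Sseq n i)
      = (beta n i - 1 / 2) * (2 * (n : ℝ) - 1) ∧
    (beta n i - 1 / 2) * (2 * (n : ℝ) - 1) > 0 :=
  stmt_11_general n i hn hβ
end

section
/- For the hard FedEx instance and any 1 ≤ i ≤ n and any real x > 3n+i, R_{≥i}(3n+i) − R_{≥i}(x) > n, where R_{≥i}(3n+i) ≥ β_i(3n+i) + (n−i)(C(2n−1) + S_i) and R_{≥i}(x) ≤ (n−i)(2nC + S_i) for x > 3n+i+1 (with C = 1/2). -/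
/-! The lower bound at `3n + i` and the upper bound at `x` share the term `(n - i)(n + S_i)`,
so the difference is at least `β_i (3n + i) - (n - i)/2`, and `β_i > 1/2` makes this
exceed `(3n + i)/2 - (n - i)/2 = n + i`. -/

theorem stmt_12_general (n i : ℕ) (h1 : 1 ≤ i)
    (R : ℝ → ℝ) (x : ℝ)
    (hR1 : R (3 * (n : ℝ) + i) ≥
      beta n i * (3 * (n : ℝ) + i)
        + ((n : ℝ) - i) * ((1 / 2) * (2 * (n : ℝ) - 1) + Sseq n i))
    (hR2 : R x ≤ ((n : ℝ) - i) * (2 * (n : ℝ) * (1 / 2) + Sseq n i))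
    (hβ : beta n i > 1 / 2) :
    R (3 * (n : ℝ) + i) - R x > n := by
  have hpos : (0 : ℝ) < 3 * n + i := by
    have : (1 : ℝ) ≤ i := by exact_mod_cast h1
    linarith [n.cast_nonneg (α := ℝ)]
  have hβ_mul : (3 * n + i : ℝ) / 2 < beta n i * (3 * n + i) := by
    linarith [mul_lt_mul_of_pos_right hβ hpos]
  linarith

theorem stmt_12 (n i : ℕ) (hn : 1 ≤ n) (h1 : 1 ≤ i) (hi : i ≤ n)
    (R : ℝ → ℝ) (x : ℝ) (hx : x > 3 * (n : ℝ) + i)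
    (hR1 : R (3 * (n : ℝ) + i) ≥
      beta n i * (3 * (n : ℝ) + i)
        + ((n : ℝ) - i) * ((1 / 2) * (2 * (n : ℝ) - 1) + Sseq n i))
    (hR2 : R x ≤ ((n : ℝ) - i) * (2 * (n : ℝ) * (1 / 2) + Sseq n i))
    (hβ : beta n i > 1 / 2) :
    R (3 * (n : ℝ) + i) - R x > n :=
  stmt_12_general n i h1 R x hR1 hR2 hβ
end

section
/- For the hard FedEx instance with n/4 ≤ i, at any integer point x in [n+1, n+i] not among the breakpoints used by a polygon approximation S of R̃_{≥i+1}: the midpoint value satisfies (1/2)(R̃_{≥i+1}(x−1) + R̃_{≥i+1}(x+1)) = R̃_{≥i+1}(x) − ((n−i)/2)·(λ−1)/λ^{x−n}, and hence R̃_{≥i+1}(x) − S(x) ≥ 3(n−i)/(32n) whenever S(x) ≤ (1/2)(R̃_{≥i+1}(x−1) + R̃_{≥i+1}(x+1)). -/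
open Finset

theorem geom_partial_sum_midpoint {a : ℝ} (ha : a ≠ 0) (c : ℝ) (k : ℕ) :
    (1 / 2) * ((c + ∑ j ∈ range k, (a⁻¹) ^ j) + (c + ∑ j ∈ range (k + 2), (a⁻¹) ^ j))
      = (c + ∑ j ∈ range (k + 1), (a⁻¹) ^ j) - (1 / 2) * (a - 1) / a ^ (k + 1) := by
  simp only [sum_range_succ, inv_pow]
  field_simp
  ring

theorem Sseq_midpoint (n k : ℕ) :
    (1 / 2) * (Sseq n k + Sseq n (k + 2))
      = Sseq n (k + 1) - (1 / 2) * ((1 + 1 / (4 * (n : ℝ))) - 1)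
          / (1 + 1 / (4 * (n : ℝ))) ^ (k + 1) :=
  geom_partial_sum_midpoint (by positivity) _ k

theorem one_sub_mul_le_inv_one_add_pow {t : ℝ} (ht : 0 ≤ t) (k : ℕ) :
    1 - k * t ≤ ((1 + t) ^ k)⁻¹ := by
  have hpos : 0 < 1 + t := by linarith
  have hstep : -2 ≤ (1 + t)⁻¹ - 1 := by
    have : 0 < (1 + t)⁻¹ := inv_pos.mpr hpos
    linarith
  have hbern := one_add_mul_le_pow hstep k
  have hdrop : -(k * t) ≤ k * ((1 + t)⁻¹ - 1) := by
    have : (1 + t)⁻¹ - 1 = -(t / (1 + t)) := by field_simp; ring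
    rw [this, mul_neg, neg_le_neg_iff, ← mul_div_assoc]
    exact div_le_self (by positivity) (by linarith)
  calc 1 - k * t ≤ 1 + k * ((1 + t)⁻¹ - 1) := by linarith
    _ ≤ ((1 + t) ^ k)⁻¹ := by simpa [inv_pow] using hbern

theorem three_quarters_lt_inv_pow {n k : ℕ} (hk : 2 * k ≤ n) :
    (3 : ℝ) / 4 < ((1 + 1 / (4 * (n : ℝ))) ^ k)⁻¹ := by
  have hkn : (k : ℝ) * (1 / (4 * n)) ≤ 1 / 8 := by
    rcases Nat.eq_zero_or_pos n with rfl | hn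
    · simp
    have hk' : (2 * k : ℝ) ≤ n := by exact_mod_cast hk
    rw [mul_one_div, div_le_div_iff₀ (by positivity) (by norm_num)]
    linarith
  linarith [one_sub_mul_le_inv_one_add_pow (t := 1 / (4 * (n : ℝ))) (by positivity) k]

theorem midpoint_gap_ge {n i k : ℕ} (hi : i ≤ n) (hk : 2 * k ≤ n) :
    3 * ((n : ℝ) - i) / (32 * (n : ℝ))
      ≤ (((n : ℝ) - i) / 2) * ((1 + 1 / (4 * (n : ℝ))) - 1) / (1 + 1 / (4 * (n : ℝ))) ^ k := by
  have hc : 0 ≤ ((n : ℝ) - i) / (8 * n) :=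
    div_nonneg (sub_nonneg.mpr (by exact_mod_cast hi)) (by positivity)
  calc 3 * ((n : ℝ) - i) / (32 * (n : ℝ)) = ((n : ℝ) - i) / (8 * n) * (3 / 4) := by ring
    _ ≤ ((n : ℝ) - i) / (8 * n) * ((1 + 1 / (4 * (n : ℝ))) ^ k)⁻¹ :=
        mul_le_mul_of_nonneg_left (three_quarters_lt_inv_pow hk).le hc
    _ = _ := by ring

theorem stmt_16_general (n i : ℕ) (hi2 : 2 * i ≤ n)
    (Rt : ℕ → ℝ)
    (hRt : ∀ k ≤ i + 1, Rt (n + k) = ((n : ℝ) - i) * Sseq n k)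
    (x : ℕ) (hx1 : n + 1 ≤ x) (hx2 : x ≤ n + i) :
    (1 / 2) * (Rt (x - 1) + Rt (x + 1))
      = Rt x - (((n : ℝ) - i) / 2) * ((1 + 1 / (4 * (n : ℝ))) - 1)
          / (1 + 1 / (4 * (n : ℝ))) ^ (x - n) ∧
    ∀ Sx : ℝ, Sx ≤ (1 / 2) * (Rt (x - 1) + Rt (x + 1)) →
      Rt x - Sx ≥ 3 * ((n : ℝ) - i) / (32 * (n : ℝ)) := by
  obtain ⟨m, rfl⟩ : ∃ m, x = n + (m + 1) := ⟨x - n - 1, by omega⟩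
  have hprev : Rt (n + (m + 1) - 1) = ((n : ℝ) - i) * Sseq n m := by
    rw [show n + (m + 1) - 1 = n + m by omega]; exact hRt m (by omega)
  have hnext : Rt (n + (m + 1) + 1) = ((n : ℝ) - i) * Sseq n (m + 2) := by
    rw [show n + (m + 1) + 1 = n + (m + 2) by omega]; exact hRt (m + 2) (by omega)
  have hmid : (1 / 2) * (Rt (n + (m + 1) - 1) + Rt (n + (m + 1) + 1))
      = Rt (n + (m + 1)) - (((n : ℝ) - i) / 2) * ((1 + 1 / (4 * (n : ℝ))) - 1)
          / (1 + 1 / (4 * (n : ℝ))) ^ (n + (m + 1) - n) := by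
    rw [hprev, hnext, hRt (m + 1) (by omega), Nat.add_sub_cancel_left,
      ← mul_add, mul_left_comm, Sseq_midpoint]
    ring
  refine ⟨hmid, fun Sx hSx => ?_⟩
  have hgap := midpoint_gap_ge (n := n) (i := i) (k := m + 1) (by omega) (by omega)
  rw [hmid, Nat.add_sub_cancel_left] at hSx
  linarith

theorem stmt_16 (n i : ℕ) (hn : 1 ≤ n) (hi1 : n ≤ 4 * i) (hi2 : 2 * i ≤ n)
    (Rt : ℕ → ℝ)
    (hRt : ∀ k ≤ i + 1, Rt (n + k) = ((n : ℝ) - i) * Sseq n k)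
    (x : ℕ) (hx1 : n + 1 ≤ x) (hx2 : x ≤ n + i) :
    (1 / 2) * (Rt (x - 1) + Rt (x + 1))
      = Rt x - (((n : ℝ) - i) / 2) * ((1 + 1 / (4 * (n : ℝ))) - 1)
          / (1 + 1 / (4 * (n : ℝ))) ^ (x - n) ∧
    ∀ Sx : ℝ, Sx ≤ (1 / 2) * (Rt (x - 1) + Rt (x + 1)) →
      Rt x - Sx ≥ 3 * ((n : ℝ) - i) / (32 * (n : ℝ)) :=
  stmt_16_general n i hi2 Rt hRt x hx1 hx2
end

section
/- For any pmf a on {0,...,V} with a(n+i) = 0 and mean Σ_j j·a(j) ≤ x for n+i ≤ x ≤ 3n+i−1/2, if S is a concave function with S ≥ R_{≥i} on {0,...,5n}∖{n+i}, S increasing below 3n+i, and S given on [n+i−1, 3n+i] by the chord of R̃_{≥i} joining (n+i−1, R̃_{≥i}(n+i−1)) and (3n+i, R̃_{≥i}(3n+i)), then Σ_j a(j)·R_{≥i}(j) ≤ R̃_{≥i}(x) − ((n+1−i)/(2n+1))·(3n+i−x)·(1/λ^{i−1} − 1/2). -/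
theorem Finset.sum_mul_le_sum_mul_of_le_of_ne_zero {ι : Type*} {s : Finset ι} {w f g : ι → ℝ}
    (hw : ∀ j ∈ s, 0 ≤ w j) (hfg : ∀ j ∈ s, w j ≠ 0 → f j ≤ g j) :
    ∑ j ∈ s, w j * f j ≤ ∑ j ∈ s, w j * g j := by
  refine Finset.sum_le_sum fun j hj => ?_
  rcases eq_or_ne (w j) 0 with h | h
  · simp [h]
  · exact mul_le_mul_of_nonneg_left (hfg j hj h) (hw j hj)

theorem ConcaveOn.sum_mul_le_of_sum_mul_le {ι : Type*} {s : Finset ι} {D T : Set ℝ}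
    {f : ℝ → ℝ} {w p : ι → ℝ} {x : ℝ} (hf : ConcaveOn ℝ D f) (hmono : MonotoneOn f T)
    (hw₀ : ∀ j ∈ s, 0 ≤ w j) (hw₁ : ∑ j ∈ s, w j = 1) (hp : ∀ j ∈ s, p j ∈ D)
    (hmeanT : ∑ j ∈ s, w j * p j ∈ T) (hx : x ∈ T) (hmean : ∑ j ∈ s, w j * p j ≤ x) :
    ∑ j ∈ s, w j * f (p j) ≤ f x :=
  calc ∑ j ∈ s, w j * f (p j) ≤ f (∑ j ∈ s, w j * p j) := by
        simpa only [smul_eq_mul] using hf.le_map_sum hw₀ hw₁ hp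
    _ ≤ f x := hmono hmeanT hx hmean

theorem Sseq_succ (n k : ℕ) : Sseq n (k + 1) = Sseq n k + ((1 + 1 / (4 * (n : ℝ)))⁻¹) ^ k := by
  rw [Sseq, Sseq, Finset.sum_range_succ, add_assoc]

theorem Sseq_chord_eq (n i : ℕ) (hi : 1 ≤ i) (x : ℝ) :
    ((n : ℝ) + 1 - i) * Sseq n (i - 1)
        + (x - ((n : ℝ) + i - 1)) / (2 * (n : ℝ) + 1)
          * (((n : ℝ) + 1 - i) * ((n : ℝ) + Sseq n i) - ((n : ℝ) + 1 - i) * Sseq n (i - 1))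
      = ((n : ℝ) + 1 - i) * ((1 / 2) * (x - (n : ℝ) - i) + Sseq n i)
        - (((n : ℝ) + 1 - i) / (2 * (n : ℝ) + 1)) * (3 * (n : ℝ) + i - x)
          * (1 / (1 + 1 / (4 * (n : ℝ))) ^ (i - 1) - 1 / 2) := by
  obtain ⟨k, rfl⟩ : ∃ k, i = k + 1 := ⟨i - 1, by omega⟩
  rw [Nat.add_sub_cancel, Sseq_succ, one_div (_ ^ k), ← inv_pow]
  generalize ((1 + 1 / (4 * (n : ℝ)))⁻¹) ^ k = q
  field_simp
  push_cast
  ring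

theorem stmt_17_general (n i : ℕ) (hi1 : 1 ≤ i)
    (a : ℕ → ℝ) (ha0 : ∀ j, 0 ≤ a j)
    (ha1 : ∑ j ∈ Finset.range (5 * n + 1), a j = 1)
    (hai : a (n + i) = 0)
    (x : ℝ) (hx1 : (n : ℝ) + i ≤ x) (hx2 : x ≤ 3 * (n : ℝ) + i - 1 / 2)
    (hmean : ∑ j ∈ Finset.range (5 * n + 1), (j : ℝ) * a j ≤ x)
    (R : ℕ → ℝ) (S : ℝ → ℝ)
    (hconc : ConcaveOn ℝ (Set.Icc (0 : ℝ) (5 * (n : ℝ))) S)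
    (hSR : ∀ j ≤ 5 * n, j ≠ n + i → R j ≤ S j)
    (hmono : MonotoneOn S (Set.Icc (0 : ℝ) (3 * (n : ℝ) + i)))
    (hchord : ∀ y ∈ Set.Icc ((n : ℝ) + i - 1) (3 * (n : ℝ) + i),
      S y = ((n : ℝ) + 1 - i) * Sseq n (i - 1)
        + (y - ((n : ℝ) + i - 1)) / (2 * (n : ℝ) + 1)
          * (((n : ℝ) + 1 - i) * ((n : ℝ) + Sseq n i)
            - ((n : ℝ) + 1 - i) * Sseq n (i - 1))) :
    ∑ j ∈ Finset.range (5 * n + 1), a j * R j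
      ≤ ((n : ℝ) + 1 - i) * ((1 / 2) * (x - (n : ℝ) - i) + Sseq n i)
        - (((n : ℝ) + 1 - i) / (2 * (n : ℝ) + 1)) * (3 * (n : ℝ) + i - x)
          * (1 / (1 + 1 / (4 * (n : ℝ))) ^ (i - 1) - 1 / 2) := by
  simp only [mul_comm (_ : ℝ) (a _)] at hmean
  have hmean₀ : 0 ≤ ∑ j ∈ Finset.range (5 * n + 1), a j * j :=
    Finset.sum_nonneg fun j _ => mul_nonneg (ha0 j) j.cast_nonneg
  have hsupport : ∀ j ∈ Finset.range (5 * n + 1), (j : ℝ) ∈ Set.Icc 0 (5 * (n : ℝ)) :=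
    fun j hj => ⟨j.cast_nonneg, by exact_mod_cast Finset.mem_range_succ_iff.mp hj⟩
  calc ∑ j ∈ Finset.range (5 * n + 1), a j * R j
      ≤ ∑ j ∈ Finset.range (5 * n + 1), a j * S j :=
        Finset.sum_mul_le_sum_mul_of_le_of_ne_zero (fun j _ => ha0 j) fun j hj haj =>
          hSR j (Finset.mem_range_succ_iff.mp hj) (by rintro rfl; exact haj hai)
    _ ≤ S x := hconc.sum_mul_le_of_sum_mul_le hmono (fun j _ => ha0 j) ha1 hsupport
        ⟨hmean₀, by linarith⟩ ⟨by linarith, by linarith⟩ hmean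
    _ = _ := by rw [hchord x ⟨by linarith, by linarith⟩, Sseq_chord_eq n i hi1 x]

theorem stmt_17 (n i : ℕ) (hn : 1 ≤ n) (hi1 : 1 ≤ i) (hi2 : i ≤ n)
    (a : ℕ → ℝ) (ha0 : ∀ j, 0 ≤ a j)
    (ha1 : ∑ j ∈ Finset.range (5 * n + 1), a j = 1)
    (hai : a (n + i) = 0)
    (x : ℝ) (hx1 : (n : ℝ) + i ≤ x) (hx2 : x ≤ 3 * (n : ℝ) + i - 1 / 2)
    (hmean : ∑ j ∈ Finset.range (5 * n + 1), (j : ℝ) * a j ≤ x)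
    (R : ℕ → ℝ) (S : ℝ → ℝ)
    (hconc : ConcaveOn ℝ (Set.Icc (0 : ℝ) (5 * (n : ℝ))) S)
    (hSR : ∀ j ≤ 5 * n, j ≠ n + i → R j ≤ S j)
    (hmono : MonotoneOn S (Set.Icc (0 : ℝ) (3 * (n : ℝ) + i)))
    (hchord : ∀ y ∈ Set.Icc ((n : ℝ) + i - 1) (3 * (n : ℝ) + i),
      S y = ((n : ℝ) + 1 - i) * Sseq n (i - 1)
        + (y - ((n : ℝ) + i - 1)) / (2 * (n : ℝ) + 1)
          * (((n : ℝ) + 1 - i) * ((n : ℝ) + Sseq n i)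
            - ((n : ℝ) + 1 - i) * Sseq n (i - 1))) :
    ∑ j ∈ Finset.range (5 * n + 1), a j * R j
      ≤ ((n : ℝ) + 1 - i) * ((1 / 2) * (x - (n : ℝ) - i) + Sseq n i)
        - (((n : ℝ) + 1 - i) / (2 * (n : ℝ) + 1)) * (3 * (n : ℝ) + i - x)
          * (1 / (1 + 1 / (4 * (n : ℝ))) ^ (i - 1) - 1 / 2) :=
  stmt_17_general n i hi1 a ha0 ha1 hai x hx1 hx2 hmean R S hconc hSR hmono hchord
end
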